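/- arXiv:2312.11353 — 2 statements merged into one kernel-verified Lean document; each statement's English description precedes it below -/
import Mathlib

section
/- Let c₁, C_B > 0 and suppose w : ℝ³ × (0,∞) → ℝ³ satisfies the pointwise integral inequality |w(x,t)| ≤ ∫₀^t ∫_{ℝ³} C_B (|x−y| + √(t−s))^{−4} · c₁² (|y| + √s)^{−2} dy ds for all (x,t). Then there is a constant C depending only on c₁ and C_B such that |w(x,t)| ≤ C √t / (|x| + √t)² for all x ∈ ℝ³, t > 0. -/
open MeasureTheory Set
open scoped ENNReal

noncomputable section

abbrev E3 := EuclideanSpace ℝ (Fin 3)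

/-!
Write `P = ‖x - y‖ + √(t - s)` and `Q = ‖y‖ + √s`. Since `P + Q ≥ ‖x‖ + √t`, the elementary
inequality `(P + Q)² Q² ≤ 4 (P⁴ + Q⁴)` bounds the integrand by `4 (‖x‖ + √t)⁻² (P⁻⁴ + Q⁻⁴)`.
In dimension three, scaling gives `∫ (‖y‖ + a)⁻⁴ dy = K / a` with `K = ∫ (1 + ‖z‖)⁻⁴ dz`, so
the inner integral is at most `4 K (‖x‖ + √t)⁻² ((t - s)^(-1/2) + s^(-1/2))`, whose time
integral is `16 K √t (‖x‖ + √t)⁻²`.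
-/

open Module

lemma norm_add_rpow_neg_eq {E : Type*} [NormedAddCommGroup E] [NormedSpace ℝ E] {a : ℝ}
    (ha : 0 < a) (r : ℝ) (z : E) :
    (‖z‖ + a) ^ (-r) = a ^ (-r) * (1 + ‖a⁻¹ • z‖) ^ (-r) := by
  rw [← Real.mul_rpow ha.le (by positivity), norm_smul, Real.norm_of_nonneg (inv_nonneg.2 ha.le)]
  congr 1
  field_simp
  ring

section Scaling

variable {E : Type*} [NormedAddCommGroup E] [NormedSpace ℝ E] [FiniteDimensional ℝ E]
  [MeasurableSpace E] [BorelSpace E] (μ : Measure E) [μ.IsAddHaarMeasure]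

lemma integral_norm_add_rpow_neg {a : ℝ} (ha : 0 < a) (r : ℝ) :
    ∫ z, (‖z‖ + a) ^ (-r) ∂μ = a ^ ((finrank ℝ E : ℝ) - r) * ∫ z, (1 + ‖z‖) ^ (-r) ∂μ := by
  simp_rw [norm_add_rpow_neg_eq ha r]
  rw [integral_const_mul,
    Measure.integral_comp_inv_smul_of_nonneg μ (fun z => (1 + ‖z‖) ^ (-r)) ha.le, smul_eq_mul,
    ← mul_assoc, ← Real.rpow_natCast, ← Real.rpow_add ha, neg_add_eq_sub]

lemma integrable_norm_add_rpow_neg {a : ℝ} (ha : 0 < a) {r : ℝ} (hr : (finrank ℝ E : ℝ) < r) :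
    Integrable (fun z => (‖z‖ + a) ^ (-r)) μ := by
  simp_rw [norm_add_rpow_neg_eq ha r]
  exact ((integrable_comp_smul_iff μ (fun z => (1 + ‖z‖) ^ (-r)) (inv_ne_zero ha.ne')).2
    (integrable_one_add_norm hr)).const_mul _

lemma integral_norm_sub_add_rpow_neg (x : E) {a : ℝ} (ha : 0 < a) (r : ℝ) :
    ∫ y, (‖x - y‖ + a) ^ (-r) ∂μ = a ^ ((finrank ℝ E : ℝ) - r) * ∫ z, (1 + ‖z‖) ^ (-r) ∂μ := by
  simp_rw [norm_sub_rev x]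
  rw [integral_sub_right_eq_self (fun z => (‖z‖ + a) ^ (-r)) x, integral_norm_add_rpow_neg μ ha]

lemma integrable_norm_sub_add_rpow_neg (x : E) {a : ℝ} (ha : 0 < a) {r : ℝ}
    (hr : (finrank ℝ E : ℝ) < r) : Integrable (fun y => (‖x - y‖ + a) ^ (-r)) μ := by
  simp_rw [norm_sub_rev x]
  exact (integrable_norm_add_rpow_neg μ ha hr).comp_sub_right x

lemma integral_one_add_norm_rpow_neg_pos {r : ℝ} (hr : (finrank ℝ E : ℝ) < r) :
    0 < ∫ z, (1 + ‖z‖) ^ (-r) ∂μ := by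
  rw [integral_pos_iff_support_of_nonneg (fun z => by positivity) (integrable_one_add_norm hr)]
  have : Function.support (fun z : E => (1 + ‖z‖) ^ (-r)) = univ :=
    Function.support_eq_univ fun z => (Real.rpow_pos_of_pos (by positivity) _).ne'
  rw [this]
  exact Measure.measure_univ_pos.2 (NeZero.ne μ)

end Scaling

lemma rpow_neg_four_mul_rpow_neg_two_le {P Q M : ℝ} (hP : 0 < P) (hQ : 0 < Q) (hM : 0 < M)
    (hMPQ : M ≤ P + Q) :
    P ^ (-4 : ℝ) * Q ^ (-2 : ℝ) ≤ 4 / M ^ 2 * (P ^ (-4 : ℝ) + Q ^ (-4 : ℝ)) := by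
  have key : M ^ 2 * Q ^ 2 ≤ 4 * (P ^ 4 + Q ^ 4) := by
    have : M ^ 2 ≤ (P + Q) ^ 2 := pow_le_pow_left₀ hM.le hMPQ 2
    nlinarith [sq_nonneg (P ^ 2 - Q ^ 2), sq_nonneg (P - Q), mul_pos hP hQ, sq_nonneg Q]
  simp only [Real.rpow_neg hP.le, Real.rpow_neg hQ.le]
  norm_cast
  rw [div_mul_eq_mul_div, le_div_iff₀ (by positivity)]
  field_simp
  nlinarith

lemma integral_rpow_neg_four_mul_rpow_neg_two_le {E : Type*} [NormedAddCommGroup E]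
    [NormedSpace ℝ E] [FiniteDimensional ℝ E] [MeasurableSpace E] [BorelSpace E]
    (μ : Measure E) [μ.IsAddHaarMeasure] (hE : finrank ℝ E = 3) (x : E) {a b M : ℝ}
    (ha : 0 < a) (hb : 0 < b) (hM : 0 < M) (hMab : M ≤ ‖x‖ + a + b) :
    ∫ y, (‖x - y‖ + a) ^ (-4 : ℝ) * (‖y‖ + b) ^ (-2 : ℝ) ∂μ
      ≤ 4 * (∫ z, (1 + ‖z‖) ^ (-4 : ℝ) ∂μ) / M ^ 2 * (a⁻¹ + b⁻¹) := by
  have hr : (finrank ℝ E : ℝ) < 4 := by rw [hE]; norm_num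
  have hPQ : ∀ y, M ≤ (‖x - y‖ + a) + (‖y‖ + b) := fun y => by
    linarith [norm_sub_norm_le x y]
  have hdom : Integrable (fun y => 4 / M ^ 2 *
      ((‖x - y‖ + a) ^ (-4 : ℝ) + (‖y‖ + b) ^ (-4 : ℝ))) μ :=
    ((integrable_norm_sub_add_rpow_neg μ x ha hr).add
      (integrable_norm_add_rpow_neg μ hb hr)).const_mul _
  refine (integral_mono_of_nonneg (Filter.Eventually.of_forall fun y => by positivity) hdom
    (Filter.Eventually.of_forall fun y => rpow_neg_four_mul_rpow_neg_two_le (by positivity)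
      (by positivity) hM (hPQ y))).trans_eq ?_
  rw [integral_const_mul, integral_add (integrable_norm_sub_add_rpow_neg μ x ha hr)
    (integrable_norm_add_rpow_neg μ hb hr), integral_norm_sub_add_rpow_neg μ x ha,
    integral_norm_add_rpow_neg μ hb, hE]
  norm_num [Real.rpow_neg_one]
  ring

lemma sqrt_le_sqrt_sub_add_sqrt {s t : ℝ} (hs : 0 ≤ s) (hst : s ≤ t) : √t ≤ √(t - s) + √s := by
  rw [Real.sqrt_le_left (by positivity), add_sq, Real.sq_sqrt (by linarith), Real.sq_sqrt hs]
  nlinarith [mul_nonneg (Real.sqrt_nonneg (t - s)) (Real.sqrt_nonneg s)]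

lemma integral_rpow_neg_four_mul_rpow_neg_two_sqrt_le {E : Type*} [NormedAddCommGroup E]
    [NormedSpace ℝ E] [FiniteDimensional ℝ E] [MeasurableSpace E] [BorelSpace E]
    (μ : Measure E) [μ.IsAddHaarMeasure] (hE : finrank ℝ E = 3) (x : E) {s t : ℝ}
    (hs : 0 < s) (hst : s < t) :
    ∫ y, (‖x - y‖ + √(t - s)) ^ (-4 : ℝ) * (‖y‖ + √s) ^ (-2 : ℝ) ∂μ
      ≤ 4 * (∫ z, (1 + ‖z‖) ^ (-4 : ℝ) ∂μ) / (‖x‖ + √t) ^ 2 * ((√(t - s))⁻¹ + (√s)⁻¹) :=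
  integral_rpow_neg_four_mul_rpow_neg_two_le μ hE x (Real.sqrt_pos.2 (by linarith))
    (Real.sqrt_pos.2 hs) (by positivity [Real.sqrt_pos.2 (hs.trans hst)])
    (by linarith [sqrt_le_sqrt_sub_add_sqrt hs.le hst.le])

lemma inv_sqrt_eq_rpow {s : ℝ} (hs : 0 ≤ s) : (√s)⁻¹ = s ^ (-(1 / 2) : ℝ) := by
  rw [Real.sqrt_eq_rpow, Real.rpow_neg hs]

lemma intervalIntegrable_inv_sqrt {t : ℝ} (ht : 0 ≤ t) :
    IntervalIntegrable (fun s => (√s)⁻¹) volume 0 t := by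
  refine (intervalIntegral.intervalIntegrable_rpow' (r := -(1 / 2)) (by norm_num)).congr_uIoo
    fun s hs => (inv_sqrt_eq_rpow ?_).symm
  rw [uIoo_of_le ht] at hs
  exact hs.1.le

lemma intervalIntegrable_inv_sqrt_sub {t : ℝ} (ht : 0 ≤ t) :
    IntervalIntegrable (fun s => (√(t - s))⁻¹) volume 0 t := by
  simpa using ((intervalIntegrable_inv_sqrt ht).comp_sub_left t).symm

lemma integral_inv_sqrt {t : ℝ} (ht : 0 ≤ t) : ∫ s in (0)..t, (√s)⁻¹ = 2 * √t := by
  rw [intervalIntegral.integral_congr (g := fun s => s ^ (-(1 / 2) : ℝ)) fun s hs =>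
      inv_sqrt_eq_rpow (by rw [uIcc_of_le ht] at hs; exact hs.1),
    integral_rpow (Or.inl (by norm_num)), Real.zero_rpow (by norm_num), Real.sqrt_eq_rpow]
  norm_num
  ring

lemma integrableOn_inv_sqrt_sub_add_inv_sqrt {t : ℝ} (ht : 0 ≤ t) :
    IntegrableOn (fun s => (√(t - s))⁻¹ + (√s)⁻¹) (Ioo 0 t) :=
  ((intervalIntegrable_inv_sqrt_sub ht).add (intervalIntegrable_inv_sqrt ht)).1.mono_set
    Ioo_subset_Ioc_self

lemma integral_Ioo_inv_sqrt_sub_add_inv_sqrt {t : ℝ} (ht : 0 ≤ t) :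
    ∫ s in Ioo 0 t, ((√(t - s))⁻¹ + (√s)⁻¹) = 4 * √t := by
  rw [← integral_Ioc_eq_integral_Ioo, ← intervalIntegral.integral_of_le ht,
    intervalIntegral.integral_add (intervalIntegrable_inv_sqrt_sub ht)
      (intervalIntegrable_inv_sqrt ht),
    intervalIntegral.integral_comp_sub_left (fun s => (√s)⁻¹), sub_self, sub_zero,
    integral_inv_sqrt ht]
  ring

/-- First bootstrap step for the upper bound on the error: if
`|w(x,t)| ≤ ∫₀ᵗ∫ C_B (|x−y|+√(t−s))⁻⁴ c₁² (|y|+√s)⁻² dy ds` for all `(x,t)`, then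
`|w(x,t)| ≤ C √t/(|x|+√t)²` with `C = C(c₁, C_B)`. -/
theorem error_first_bootstrap (c₁ C_B : ℝ) (hc₁ : 0 < c₁) (hCB : 0 < C_B) :
    ∃ C : ℝ, 0 < C ∧
      ∀ w : E3 → ℝ → E3,
        (∀ (x : E3) (t : ℝ), 0 < t →
          ‖w x t‖ ≤ ∫ s in Set.Ioo (0 : ℝ) t, ∫ y : E3,
            C_B * (‖x - y‖ + Real.sqrt (t - s)) ^ (-(4 : ℝ)) *
              (c₁ ^ 2 * (‖y‖ + Real.sqrt s) ^ (-(2 : ℝ)))) →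
        ∀ (x : E3) (t : ℝ), 0 < t →
          ‖w x t‖ ≤ C * Real.sqrt t / (‖x‖ + Real.sqrt t) ^ 2 := by
  set K := ∫ z : E3, (1 + ‖z‖) ^ (-(4 : ℝ))
  have hE : finrank ℝ E3 = 3 := by simp
  have hK : 0 < K := integral_one_add_norm_rpow_neg_pos volume (by rw [hE]; norm_num)
  refine ⟨16 * C_B * c₁ ^ 2 * K, by positivity, fun w hw x t ht => ?_⟩
  set N := ‖x‖ + √t
  have hinner : ∀ s ∈ Ioo 0 t, ∫ y : E3, C_B * (‖x - y‖ + √(t - s)) ^ (-(4 : ℝ)) *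
      (c₁ ^ 2 * (‖y‖ + √s) ^ (-(2 : ℝ))) ≤
      C_B * c₁ ^ 2 * (4 * K / N ^ 2 * ((√(t - s))⁻¹ + (√s)⁻¹)) := by
    rintro s ⟨hs, hst⟩
    calc _ = C_B * c₁ ^ 2 *
          ∫ y : E3, (‖x - y‖ + √(t - s)) ^ (-(4 : ℝ)) * (‖y‖ + √s) ^ (-(2 : ℝ)) := by
          rw [← integral_const_mul]; congr 1 with y; ring
      _ ≤ _ := by
          gcongr
          exact integral_rpow_neg_four_mul_rpow_neg_two_sqrt_le volume hE x hs hst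
  calc ‖w x t‖ ≤ _ := hw x t ht
    _ ≤ ∫ s in Ioo 0 t, C_B * c₁ ^ 2 * (4 * K / N ^ 2 * ((√(t - s))⁻¹ + (√s)⁻¹)) :=
        integral_mono_of_nonneg
          (Filter.Eventually.of_forall fun s => integral_nonneg fun y => by positivity)
          (((integrableOn_inv_sqrt_sub_add_inv_sqrt ht.le).const_mul _).const_mul _)
          ((ae_restrict_iff' measurableSet_Ioo).2 (Filter.Eventually.of_forall hinner))
    _ = 16 * C_B * c₁ ^ 2 * K * √t / N ^ 2 := by
        rw [integral_const_mul, integral_const_mul, integral_Ioo_inv_sqrt_sub_add_inv_sqrt ht.le]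
        ring
end
end

section
/- Let c₁ > 0, 3 < p < ∞, and C_B > 0. Suppose nonnegative functions f, g : (0,T) → [0,∞) satisfy g(t) = t^{(p−3)/(2p)} f(t), sup_{0<t<T} g(t) < ∞, and f(t) ≤ C_B (1 + c₁) ε ∫₀^t (t−s)^{−1/2} s^{−1/2 − (p−3)/(2p)} g(s)·s^{(p−3)/(2p)}·s^{−(p−3)/(2p)} ds, i.e. f(t) ≤ C_B(1+c₁)ε (sup_{0<s<t} g(s)) ∫₀^t (t−s)^{−1/2} s^{−1/2−(p−3)/(2p)} ds. If ε ≤ 1/(2 C_B (1+c₁) B(1/2, 3/(2p))) where B is the Beta function, then g ≡ 0 on (0,T), hence f ≡ 0. -/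
/-!
By the Beta-function identity the kernel integral equals `t^{-(p-3)/(2p)} B(1/2, 3/(2p))`, so the
weight `t^{(p-3)/(2p)}` cancels it exactly and the smallness of `ε` gives `g(t) ≤ ½ sup g` on
`(0,T)`. Taking the supremum forces `sup g ≤ 0`, hence `g = 0`, and then `f = 0` since the weight
is positive.
-/

open MeasureTheory Set
open scoped ENNReal

noncomputable section

/-- The Euler Beta function `B(α,β) = Γ(α)Γ(β)/Γ(α+β)`. -/
def realBeta (α β : ℝ) : ℝ := Real.Gamma α * Real.Gamma β / Real.Gamma (α + β)

lemma realBeta_pos {α β : ℝ} (hα : 0 < α) (hβ : 0 < β) : 0 < realBeta α β :=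
  ProbabilityTheory.beta_pos hα hβ

lemma ofReal_realBeta {α β : ℝ} (hα : 0 < α) (hβ : 0 < β) :
    (realBeta α β : ℂ) = Complex.betaIntegral α β := by
  rw [Complex.betaIntegral_eq_Gamma_mul_div _ _ (by simpa) (by simpa), ← Complex.ofReal_add]
  simp only [realBeta, Complex.Gamma_ofReal]
  norm_cast

theorem integral_sub_rpow_mul_rpow {a b t : ℝ} (ha : 0 < a) (hb : 0 < b) (ht : 0 < t) :
    ∫ s in (0 : ℝ)..t, (t - s) ^ (a - 1) * s ^ (b - 1) = t ^ (a + b - 1) * realBeta a b := by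
  apply Complex.ofReal_injective
  rw [Complex.ofReal_mul, Complex.ofReal_cpow ht.le, ofReal_realBeta ha hb,
    ← Complex.betaIntegral_symm]
  push_cast
  rw [add_comm (a : ℂ), ← Complex.betaIntegral_scaled _ _ ht, ← intervalIntegral.integral_ofReal]
  refine intervalIntegral.integral_congr fun s hs => ?_
  rw [uIcc_of_le ht.le] at hs
  push_cast [Complex.ofReal_cpow (sub_nonneg.mpr hs.2), Complex.ofReal_cpow hs.1]
  ring

lemma rpow_mul_integral_sub_rpow_neg_half_mul_rpow {γ t : ℝ} (hγ : γ < 1 / 2) (ht : 0 < t) :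
    t ^ γ * ∫ s in (0 : ℝ)..t, (t - s) ^ (-(1 : ℝ) / 2) * s ^ (-(1 : ℝ) / 2 - γ) =
      realBeta (1 / 2) (1 / 2 - γ) := by
  have hBeta := integral_sub_rpow_mul_rpow (a := 1 / 2) (b := 1 / 2 - γ) (by norm_num)
    (by linarith) ht
  rw [show (1 : ℝ) / 2 - 1 = -1 / 2 by norm_num, show 1 / 2 - γ - 1 = -(1 : ℝ) / 2 - γ by ring,
    show 1 / 2 + (1 / 2 - γ) - 1 = -γ by ring] at hBeta
  rw [hBeta, Real.rpow_neg ht.le, ← mul_assoc, mul_inv_cancel₀ (Real.rpow_pos_of_pos ht γ).ne',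
    one_mul]

lemma eq_zero_of_le_mul_sSup {α : Type*} {s : Set α} {g : α → ℝ} {c : ℝ} (hc : c < 1)
    (hbdd : BddAbove (g '' s)) (hg0 : ∀ x ∈ s, 0 ≤ g x)
    (hle : ∀ x ∈ s, g x ≤ c * sSup (g '' s)) : ∀ x ∈ s, g x = 0 := by
  intro x hx
  have hsup : sSup (g '' s) ≤ c * sSup (g '' s) :=
    csSup_le ⟨g x, mem_image_of_mem g hx⟩ (forall_mem_image.mpr hle)
  have hsup_nonpos : sSup (g '' s) ≤ 0 := by nlinarith
  exact le_antisymm ((le_csSup hbdd (mem_image_of_mem g hx)).trans hsup_nonpos) (hg0 x hx)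

theorem absorption_uniqueness_general (c₁ C_B ε p T : ℝ)
    (hc₁ : 0 < c₁) (hCB : 0 < C_B) (hp : 3 < p)
    (f g : ℝ → ℝ)
    (hg0 : ∀ t ∈ Ioo (0 : ℝ) T, 0 ≤ g t)
    (hfg : ∀ t ∈ Ioo (0 : ℝ) T, g t = t ^ ((p - 3) / (2 * p)) * f t)
    (hbdd : BddAbove (g '' Ioo (0 : ℝ) T))
    (hmain : ∀ t ∈ Ioo (0 : ℝ) T,
      f t ≤ C_B * (1 + c₁) * ε * sSup (g '' Ioo (0 : ℝ) t) *
        ∫ s in (0 : ℝ)..t, (t - s) ^ (-(1 : ℝ) / 2) * s ^ (-(1 : ℝ) / 2 - (p - 3) / (2 * p)))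
    (hεsmall : ε ≤ 1 / (2 * C_B * (1 + c₁) * realBeta (1 / 2) (3 / (2 * p)))) :
    ∀ t ∈ Ioo (0 : ℝ) T, g t = 0 ∧ f t = 0 := by
  have hp0 : 0 < p := by linarith
  have hγ : (p - 3) / (2 * p) < 1 / 2 := by rw [div_lt_iff₀ (by positivity)]; linarith
  have hβ : 1 / 2 - (p - 3) / (2 * p) = 3 / (2 * p) := by field_simp; ring
  have hB := realBeta_pos (by norm_num : (0 : ℝ) < 1 / 2) (by positivity : 0 < 3 / (2 * p))
  set K := C_B * (1 + c₁) * ε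
  have hK : K * realBeta (1 / 2) (3 / (2 * p)) ≤ 1 / 2 := by
    rw [le_div_iff₀ (by positivity)] at hεsmall
    linarith
  have hg : ∀ t ∈ Ioo (0 : ℝ) T, g t = 0 := by
    refine eq_zero_of_le_mul_sSup (by norm_num : (1 : ℝ) / 2 < 1) hbdd hg0 fun t ht => ?_
    have hsub : Ioo 0 t ⊆ Ioo 0 T := Ioo_subset_Ioo_right ht.2.le
    calc g t = t ^ ((p - 3) / (2 * p)) * f t := hfg t ht
      _ ≤ t ^ ((p - 3) / (2 * p)) * (K * sSup (g '' Ioo 0 t) *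
            ∫ s in (0 : ℝ)..t, (t - s) ^ (-(1 : ℝ) / 2) * s ^ (-(1 : ℝ) / 2 - (p - 3) / (2 * p))) :=
          mul_le_mul_of_nonneg_left (hmain t ht) (Real.rpow_nonneg ht.1.le _)
      _ = K * realBeta (1 / 2) (3 / (2 * p)) * sSup (g '' Ioo 0 t) := by
          rw [mul_left_comm, rpow_mul_integral_sub_rpow_neg_half_mul_rpow hγ ht.1, hβ]
          ring
      _ ≤ 1 / 2 * sSup (g '' Ioo 0 T) :=
          mul_le_mul hK (csSup_le_csSup hbdd (nonempty_Ioo.mpr ht.1 |>.image g) (image_mono hsub))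
            (Real.sSup_nonneg (forall_mem_image.mpr fun s hs => hg0 s (hsub hs))) (by norm_num)
  intro t ht
  refine ⟨hg t ht, ?_⟩
  have hzero := (hfg t ht).symm
  rw [hg t ht] at hzero
  exact (mul_eq_zero.mp hzero).resolve_left (Real.rpow_pos_of_pos ht.1 _).ne'

/-- The absorption argument behind the uniqueness criterion: if
`g(t) = t^{(p−3)/(2p)} f(t)` is bounded, `f` satisfies the convolution inequality with
prefactor `C_B(1+c₁)ε`, and `ε ≤ 1/(2 C_B (1+c₁) B(1/2, 3/(2p)))`, then `g ≡ 0`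
and hence `f ≡ 0` on `(0,T)`. -/
theorem absorption_uniqueness (c₁ C_B ε p T : ℝ)
    (hc₁ : 0 < c₁) (hCB : 0 < C_B) (hε : 0 ≤ ε) (hp : 3 < p) (hT : 0 < T)
    (f g : ℝ → ℝ)
    (hf0 : ∀ t ∈ Ioo (0 : ℝ) T, 0 ≤ f t)
    (hg0 : ∀ t ∈ Ioo (0 : ℝ) T, 0 ≤ g t)
    (hfg : ∀ t ∈ Ioo (0 : ℝ) T, g t = t ^ ((p - 3) / (2 * p)) * f t)
    (hbdd : BddAbove (g '' Ioo (0 : ℝ) T))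
    (hmain : ∀ t ∈ Ioo (0 : ℝ) T,
      f t ≤ C_B * (1 + c₁) * ε * sSup (g '' Ioo (0 : ℝ) t) *
        ∫ s in (0 : ℝ)..t, (t - s) ^ (-(1 : ℝ) / 2) * s ^ (-(1 : ℝ) / 2 - (p - 3) / (2 * p)))
    (hεsmall : ε ≤ 1 / (2 * C_B * (1 + c₁) * realBeta (1 / 2) (3 / (2 * p)))) :
    ∀ t ∈ Ioo (0 : ℝ) T, g t = 0 ∧ f t = 0 :=
  absorption_uniqueness_general c₁ C_B ε p T hc₁ hCB hp f g hg0 hfg hbdd hmain hεsmall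
end
end
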